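/- arXiv:2501.01726 — 5 statements merged into one kernel-verified Lean document; each statement's English description precedes it below -/
import Mathlib

section
/- For every natural number k there exists a real number x with (2k + 1/2)·π < x < (2k + 1)·π such that cos(x)·cosh(x) = −1. In particular, the characteristic equation cos(x)·cosh(x) = −1 has infinitely many positive solutions. -/
/-- For every natural number `k` there exists `x` with
`(2k + 1/2)·π < x < (2k + 1)·π` such that `cos x * cosh x = -1`;
hence the characteristic equation has infinitely many positive solutions. -/
theorem exists_root_cos_mul_cosh_eq_neg_one (k : ℕ) :
    ∃ x : ℝ, ((2 * k : ℝ) + 1 / 2) * Real.pi < x ∧ x < ((2 * k : ℝ) + 1) * Real.pi ∧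
      Real.cos x * Real.cosh x = -1 := by
  set a : ℝ := ((2 * k : ℝ) + 1 / 2) * Real.pi with ha
  set b : ℝ := ((2 * k : ℝ) + 1) * Real.pi with hb
  have hpi := Real.pi_pos
  have hab : a ≤ b := by
    apply mul_le_mul_of_nonneg_right _ hpi.le
    norm_num
  set f : ℝ → ℝ := fun x => Real.cos x * Real.cosh x with hf
  have hcont : ContinuousOn f (Set.Icc a b) :=
    (Real.continuous_cos.mul Real.continuous_cosh).continuousOn
  have hfa : f a = 0 := by
    have : a = Real.pi / 2 + (k : ℤ) * (2 * Real.pi) := by rw [ha]; push_cast; ring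
    simp [hf, this, Real.cos_add_int_mul_two_pi]
  have hfb : f b = -Real.cosh b := by
    have : b = Real.pi + (k : ℤ) * (2 * Real.pi) := by rw [hb]; push_cast; ring
    rw [hf]
    simp only [this, Real.cos_add_int_mul_two_pi, Real.cos_pi]
    ring
  have hb1 : 1 < Real.cosh b := by
    rw [Real.one_lt_cosh]
    have : 0 < b := by
      apply mul_pos _ hpi
      positivity
    linarith
  have hmem : (-1 : ℝ) ∈ Set.Ioo (f b) (f a) := by
    rw [hfa, hfb]; constructor <;> linarith
  obtain ⟨x, hx, hfx⟩ := intermediate_value_Ioo' hab hcont hmem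
  exact ⟨x, hx.1, hx.2, hfx⟩
end

section
/- Let b > 0 and L > 0 satisfy cos(bL)·cosh(bL) = −1 and sin(bL) + sinh(bL) ≠ 0, and set f = (cos(bL) + cosh(bL)) / (sin(bL) + sinh(bL)). Then the function φ(x) = cosh(bx) − cos(bx) + f·(sin(bx) − sinh(bx)) satisfies the free-end boundary conditions φ''(L) = 0 and φ'''(L) = 0. -/
/-- Let `b > 0` and `L > 0` satisfy the frequency equation
`cos (bL) * cosh (bL) = -1` with `sin (bL) + sinh (bL) ≠ 0`, and set
`f = (cos (bL) + cosh (bL)) / (sin (bL) + sinh (bL))`.  Then the mode shape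
`φ x = cosh (bx) - cos (bx) + f (sin (bx) - sinh (bx))` satisfies the
free-end boundary conditions `φ'' L = 0` and `φ''' L = 0`. -/
theorem mode_shape_free_end_conditions (b L : ℝ) (hb : 0 < b) (hL : 0 < L)
    (hfreq : Real.cos (b * L) * Real.cosh (b * L) = -1)
    (hden : Real.sin (b * L) + Real.sinh (b * L) ≠ 0)
    (f : ℝ)
    (hf : f = (Real.cos (b * L) + Real.cosh (b * L)) /
      (Real.sin (b * L) + Real.sinh (b * L)))
    (φ : ℝ → ℝ)
    (hφ : ∀ x, φ x = Real.cosh (b * x) - Real.cos (b * x) +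
      f * (Real.sin (b * x) - Real.sinh (b * x))) :
    iteratedDeriv 2 φ L = 0 ∧ iteratedDeriv 3 φ L = 0 := by
  have hmul : ∀ x : ℝ, HasDerivAt (fun y : ℝ => b * y) b x := fun x => by
    simpa using (hasDerivAt_id x).const_mul b
  have hch : ∀ x : ℝ, HasDerivAt (fun y => Real.cosh (b * y)) (b * Real.sinh (b * x)) x :=
    fun x => ((Real.hasDerivAt_cosh (b * x)).comp x (hmul x)).congr_deriv (by ring)
  have hsh : ∀ x : ℝ, HasDerivAt (fun y => Real.sinh (b * y)) (b * Real.cosh (b * x)) x :=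
    fun x => ((Real.hasDerivAt_sinh (b * x)).comp x (hmul x)).congr_deriv (by ring)
  have hco : ∀ x : ℝ, HasDerivAt (fun y => Real.cos (b * y)) (-(b * Real.sin (b * x))) x :=
    fun x => ((Real.hasDerivAt_cos (b * x)).comp x (hmul x)).congr_deriv (by ring)
  have hsi : ∀ x : ℝ, HasDerivAt (fun y => Real.sin (b * y)) (b * Real.cos (b * x)) x :=
    fun x => ((Real.hasDerivAt_sin (b * x)).comp x (hmul x)).congr_deriv (by ring)
  have hφeq : φ = fun x => Real.cosh (b * x) - Real.cos (b * x) +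
      f * (Real.sin (b * x) - Real.sinh (b * x)) := funext hφ
  have h1 : deriv φ = fun x => b * Real.sinh (b * x) + b * Real.sin (b * x) +
      f * (b * Real.cos (b * x) - b * Real.cosh (b * x)) := by
    rw [hφeq]
    funext x
    have := (((hch x).sub (hco x)).add (((hsi x).sub (hsh x)).const_mul f))
    refine this.deriv.trans ?_
    try ring
  have h2 : deriv (deriv φ) = fun x => b * (b * Real.cosh (b * x)) + b * (b * Real.cos (b * x)) +
      f * (b * (-(b * Real.sin (b * x))) - b * (b * Real.sinh (b * x))) := by
    rw [h1]
    funext x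
    have := ((((hsh x).const_mul b).add ((hsi x).const_mul b)).add
      ((((hco x).const_mul b).sub ((hch x).const_mul b)).const_mul f))
    refine this.deriv.trans ?_
    try ring
  have h3 : deriv (deriv (deriv φ)) = fun x => b * (b * (b * Real.sinh (b * x))) +
      b * (b * (-(b * Real.sin (b * x)))) +
      f * (b * (b * (-(b * Real.cos (b * x)))) - b * (b * (b * Real.cosh (b * x)))) := by
    rw [h2]
    funext x
    have := (((((hch x).const_mul b).const_mul b).add
        (((hco x).const_mul b).const_mul b)).add
      ((((((hsi x).const_mul b).neg).const_mul b).sub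
        (((hsh x).const_mul b).const_mul b)).const_mul f))
    refine this.deriv.trans ?_
    try ring
  have key2 : b * (b * Real.cosh (b * L)) + b * (b * Real.cos (b * L)) +
      f * (b * (-(b * Real.sin (b * L))) - b * (b * Real.sinh (b * L))) = 0 := by
    have hfden : f * (Real.sin (b * L) + Real.sinh (b * L)) =
        Real.cos (b * L) + Real.cosh (b * L) := by
      rw [hf]; field_simp
    linear_combination (-(b*b)) * hfden
  have key3 : b * (b * (b * Real.sinh (b * L))) + b * (b * (-(b * Real.sin (b * L)))) +
      f * (b * (b * (-(b * Real.cos (b * L)))) - b * (b * (b * Real.cosh (b * L)))) = 0 := by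
    have hfden : f * (Real.sin (b * L) + Real.sinh (b * L)) =
        Real.cos (b * L) + Real.cosh (b * L) := by
      rw [hf]; field_simp
    have hpy : Real.sin (b * L) ^ 2 + Real.cos (b * L) ^ 2 = 1 := Real.sin_sq_add_cos_sq _
    have hhy : Real.cosh (b * L) ^ 2 - Real.sinh (b * L) ^ 2 = 1 :=
      Real.cosh_sq_sub_sinh_sq _
    -- need: sinh - sin = f * (cos + cosh)
    have hkey : Real.sinh (b * L) - Real.sin (b * L) = f * (Real.cos (b * L) + Real.cosh (b * L)) := by
      rw [hf]
      rw [div_mul_eq_mul_div, eq_div_iff hden]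
      linear_combination -2*hfreq - hpy - hhy
    linear_combination (b*b*b) * hkey
  constructor
  · rw [iteratedDeriv_succ, iteratedDeriv_succ, iteratedDeriv_zero, h2]
    exact key2
  · rw [iteratedDeriv_succ, iteratedDeriv_succ, iteratedDeriv_succ, iteratedDeriv_zero, h3]
    exact key3
end

section
/- Fix L > 0, n ∈ ℕ, x_ℓ ∈ [0, L], h ∈ ℝ, frequencies ωⱼ > 0 and real numbers pⱼ = φⱼ''(x_ℓ) for j = 1, …, n. Define δY₁(τ) = h·Σⱼ₌₁ⁿ pⱼ·cos(ωⱼ τ) and δY₂(τ) = h·Σⱼ₌₁ⁿ pⱼ·sin(ωⱼ τ)/ωⱼ, and for ε > 0 define ΔY₁(τ) and ΔY₂(τ) as the sums over j of the central differences (y[u + εφⱼ, v](τ) − y[u − εφⱼ, v](τ))/(2ε) and (y[u, v + εφⱼ](τ) − y[u, v − εφⱼ](τ))/(2ε) respectively, where y is the strain measurement of the n-mode beam. Then for every ε > 0 and every t > 0, the 2×2 empirical observability Gramian ∫₀ᵗ [ΔY₁; ΔY₂]·[ΔY₁, ΔY₂] dτ is independent of ε and equals the analytical observability Gramian ∫₀ᵗ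 [δY₁; δY₂]·[δY₁, δY₂] dτ. -/
/-- For the linear `n`-mode beam, the 2×2 empirical observability Gramian built
from central differences of measurements (perturbing initial displacement and
velocity by `± ε φⱼ`) is independent of `ε` and equals the analytical
observability Gramian built from the first variations
`δY₁ τ = h ∑ⱼ pⱼ cos (ωⱼ τ)` and `δY₂ τ = h ∑ⱼ pⱼ sin (ωⱼ τ)/ωⱼ`. -/
theorem empirical_gramian_eq_analytical_gramian
    (L : ℝ) (hL : 0 < L) (n : ℕ) (xl : ℝ) (hxl : xl ∈ Set.Icc (0 : ℝ) L)
    (h : ℝ)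
    (ω : Fin n → ℝ) (hω : ∀ i, 0 < ω i)
    (φ : Fin n → ℝ → ℝ) (hφ : ∀ i, ContDiff ℝ 2 (φ i))
    (horth : ∀ i j, i ≠ j → ∫ x in (0 : ℝ)..L, φ i x * φ j x = 0)
    (c : Fin n → ℝ) (hc : ∀ i, 0 < c i)
    (hnorm : ∀ i, ∫ x in (0 : ℝ)..L, (φ i x) ^ 2 = c i)
    (u v : ℝ → ℝ) (hu : Continuous u) (hv : Continuous v)
    (y : (ℝ → ℝ) → (ℝ → ℝ) → ℝ → ℝ)
    (hy : ∀ u' v' t, y u' v' t = h * ∑ i, iteratedDeriv 2 (φ i) xl *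
      ((1 / c i) * (∫ x in (0 : ℝ)..L, u' x * φ i x) * Real.cos (ω i * t) +
        (1 / c i) * (∫ x in (0 : ℝ)..L, v' x * φ i x) * Real.sin (ω i * t) / ω i))
    (p : Fin n → ℝ) (hp : ∀ j, p j = iteratedDeriv 2 (φ j) xl)
    (δY : Fin 2 → ℝ → ℝ)
    (hδY₁ : ∀ τ, δY 0 τ = h * ∑ j, p j * Real.cos (ω j * τ))
    (hδY₂ : ∀ τ, δY 1 τ = h * ∑ j, p j * Real.sin (ω j * τ) / ω j)
    (ΔY : ℝ → Fin 2 → ℝ → ℝ)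
    (hΔY₁ : ∀ ε τ, ΔY ε 0 τ = ∑ j,
      (y (fun x => u x + ε * φ j x) v τ - y (fun x => u x - ε * φ j x) v τ) / (2 * ε))
    (hΔY₂ : ∀ ε τ, ΔY ε 1 τ = ∑ j,
      (y u (fun x => v x + ε * φ j x) τ - y u (fun x => v x - ε * φ j x) τ) / (2 * ε)) :
    ∀ ε > (0 : ℝ), ∀ t > (0 : ℝ), ∀ i k : Fin 2,
      ∫ τ in (0 : ℝ)..t, ΔY ε i τ * ΔY ε k τ =
        ∫ τ in (0 : ℝ)..t, δY i τ * δY k τ := by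
  have hφc : ∀ i, Continuous (φ i) := fun i => (hφ i).continuous
  have hint : ∀ (f g : ℝ → ℝ), Continuous f → Continuous g →
      IntervalIntegrable (fun x => f x * g x) MeasureTheory.volume 0 L :=
    fun f g hf hg => (hf.mul hg).intervalIntegrable 0 L
  have hDD : ∀ j i : Fin n, (∫ x in (0 : ℝ)..L, φ j x * φ i x) =
      if i = j then c i else 0 := by
    intro j i
    by_cases hji : i = j
    · subst hji
      rw [if_pos rfl]
      simpa [pow_two] using hnorm i
    · rw [if_neg hji]
      exact horth j i (fun hh => hji hh.symm)
  have keyadd : ∀ (ε : ℝ) (g : ℝ → ℝ), Continuous g → ∀ (j i : Fin n),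
      (∫ x in (0 : ℝ)..L, (g x + ε * φ j x) * φ i x) =
        (∫ x in (0 : ℝ)..L, g x * φ i x) +
          ε * (if i = j then c i else 0) := by
    intro ε g hg j i
    rw [← hDD j i, ← intervalIntegral.integral_const_mul,
        ← intervalIntegral.integral_add (g := fun x => ε * (φ j x * φ i x)) (hint g (φ i) hg (hφc i))
          ((continuous_const.mul ((hφc j).mul (hφc i))).intervalIntegrable 0 L)]
    congr 1; funext x; ring
  have keysub : ∀ (ε : ℝ) (g : ℝ → ℝ), Continuous g → ∀ (j i : Fin n),
      (∫ x in (0 : ℝ)..L, (g x - ε * φ j x) * φ i x) =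
        (∫ x in (0 : ℝ)..L, g x * φ i x) -
          ε * (if i = j then c i else 0) := by
    intro ε g hg j i
    rw [← hDD j i, ← intervalIntegral.integral_const_mul,
        ← intervalIntegral.integral_sub (g := fun x => ε * (φ j x * φ i x)) (hint g (φ i) hg (hφc i))
          ((continuous_const.mul ((hφc j).mul (hφc i))).intervalIntegrable 0 L)]
    congr 1; funext x; ring
  intro ε hε t ht
  have hε2 : (2 * ε) ≠ 0 := by positivity
  have hpt : ∀ i : Fin 2, ∀ τ : ℝ, ΔY ε i τ = δY i τ := by
    intro i τ
    fin_cases i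
    · show ΔY ε 0 τ = δY 0 τ
      rw [hΔY₁, hδY₁, Finset.mul_sum]
      refine Finset.sum_congr rfl (fun j _ => ?_)
      rw [div_eq_iff hε2]
      simp only [hy, keyadd ε u hu, keysub ε u hu, ← hp]
      rw [← mul_sub, ← Finset.sum_sub_distrib]
      have hs : ∀ i : Fin n,
          p i * ((1 / c i) * ((∫ x in (0:ℝ)..L, u x * φ i x) + ε * (if i = j then c i else 0)) * Real.cos (ω i * τ) +
            (1 / c i) * (∫ x in (0:ℝ)..L, v x * φ i x) * Real.sin (ω i * τ) / ω i) -
          p i * ((1 / c i) * ((∫ x in (0:ℝ)..L, u x * φ i x) - ε * (if i = j then c i else 0)) * Real.cos (ω i * τ) +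
            (1 / c i) * (∫ x in (0:ℝ)..L, v x * φ i x) * Real.sin (ω i * τ) / ω i) =
          if i = j then p j * Real.cos (ω j * τ) * (2 * ε) else 0 := by
        intro i
        by_cases hij : i = j
        · subst hij
          rw [if_pos rfl, if_pos rfl]
          have := (hc i).ne'
          field_simp
          ring
        · rw [if_neg hij, if_neg hij]
          ring
      rw [Finset.sum_congr rfl (fun i _ => hs i), Finset.sum_ite_eq' Finset.univ j
        (fun _ => p j * Real.cos (ω j * τ) * (2 * ε))]
      simp; ring
    · show ΔY ε 1 τ = δY 1 τ
      rw [hΔY₂, hδY₂, Finset.mul_sum]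
      refine Finset.sum_congr rfl (fun j _ => ?_)
      rw [div_eq_iff hε2]
      simp only [hy, keyadd ε v hv, keysub ε v hv, ← hp]
      rw [← mul_sub, ← Finset.sum_sub_distrib]
      have hs : ∀ i : Fin n,
          p i * ((1 / c i) * (∫ x in (0:ℝ)..L, u x * φ i x) * Real.cos (ω i * τ) +
            (1 / c i) * ((∫ x in (0:ℝ)..L, v x * φ i x) + ε * (if i = j then c i else 0)) * Real.sin (ω i * τ) / ω i) -
          p i * ((1 / c i) * (∫ x in (0:ℝ)..L, u x * φ i x) * Real.cos (ω i * τ) +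
            (1 / c i) * ((∫ x in (0:ℝ)..L, v x * φ i x) - ε * (if i = j then c i else 0)) * Real.sin (ω i * τ) / ω i) =
          if i = j then p j * Real.sin (ω j * τ) / ω j * (2 * ε) else 0 := by
        intro i
        by_cases hij : i = j
        · subst hij
          rw [if_pos rfl, if_pos rfl]
          have h1 := (hc i).ne'
          have h2 := (hω i).ne'
          field_simp
          ring
        · rw [if_neg hij, if_neg hij]
          ring
      rw [Finset.sum_congr rfl (fun i _ => hs i), Finset.sum_ite_eq' Finset.univ j
        (fun _ => p j * Real.sin (ω j * τ) / ω j * (2 * ε))]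
      simp; ring
  intro i k
  have : (fun τ => ΔY ε i τ * ΔY ε k τ) = fun τ => δY i τ * δY k τ :=
    funext fun τ => by rw [hpt i τ, hpt k τ]
  rw [this]
end

section
/- Let n ∈ ℕ, let d₁, …, dₙ ∈ ℝ, let Ω = diag(d₁, …, dₙ), let A be the 2n×2n real block matrix A = [[0, Iₙ], [Ω, 0]], and let c ∈ ℝ^{1×n} be a row vector with C = [c, 0] ∈ ℝ^{1×2n}. Then for every natural number m: C·A^{2m} = [c·Ωᵐ, 0] and C·A^{2m+1} = [0, c·Ωᵐ]. Consequently, the observability matrix 𝒪 whose rows are C·Aᵏ for k = 0, 1, …, 2n−1 has rank 2n if and only if the n×n matrix 𝒪_C whose rows are c·Ωᵐ for m = 0, 1, …, n−1 is invertible. -/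
open Matrix

private lemma rank_reindex_rect {l m o p : Type*} [Fintype m] [Fintype p]
    (e₁ : l ≃ o) (e₂ : m ≃ p) (A : Matrix l m ℝ) :
    (Matrix.reindex e₁ e₂ A).rank = A.rank := by
  rw [Matrix.rank, Matrix.rank, Matrix.mulVecLin_reindex, LinearMap.range_comp,
    LinearMap.range_comp, LinearEquiv.range, Submodule.map_top, LinearEquiv.finrank_map_eq]

private lemma rank_eq_card_iff_isUnit {n : Type*} [Fintype n] [DecidableEq n]
    (A : Matrix n n ℝ) : A.rank = Fintype.card n ↔ IsUnit A := by
  constructor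
  · intro h
    rw [← Matrix.mulVec_surjective_iff_isUnit]
    have hrange : LinearMap.range A.mulVecLin = ⊤ := by
      apply Submodule.eq_top_of_finrank_eq
      rw [Matrix.rank] at h
      rw [h, Module.finrank_fintype_fun_eq_card]
    intro y
    obtain ⟨x, hx⟩ := LinearMap.range_eq_top.mp hrange y
    exact ⟨x, hx⟩
  · exact A.rank_of_isUnit

/-- interleaving equivalence: `inl m ↦ 2m`, `inr m ↦ 2m+1`. -/
private def interleave (n : ℕ) : (Fin n ⊕ Fin n) ≃ Fin (2 * n) where
  toFun := Sum.elim (fun m => ⟨2 * m, by omega⟩) (fun m => ⟨2 * (m : ℕ) + 1, by omega⟩)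
  invFun k := if _ : (k : ℕ) % 2 = 0 then Sum.inl ⟨(k : ℕ) / 2, by omega⟩
    else Sum.inr ⟨(k : ℕ) / 2, by omega⟩
  left_inv := by
    rintro (⟨m, hm⟩ | ⟨m, hm⟩)
    · simp only [Sum.elim_inl]
      refine (dif_pos (show 2 * m % 2 = 0 by omega)).trans ?_
      exact congrArg _ (Fin.ext (by simp only [Fin.val_mk]; omega))
    · simp only [Sum.elim_inr]
      refine (dif_neg (show ¬ (2 * m + 1) % 2 = 0 by omega)).trans ?_
      exact congrArg _ (Fin.ext (by simp only [Fin.val_mk]; omega))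
  right_inv := by
    rintro ⟨k, hk⟩
    dsimp only
    split <;> simp <;> omega

/-- For the block matrix `A = [[0, I], [Ω, 0]]` with `Ω = diag d` and the row
vector `C = [c, 0]`: `C·A^(2m) = [c·Ωᵐ, 0]` and `C·A^(2m+1) = [0, c·Ωᵐ]` for
every `m`, and the observability matrix with rows `C·Aᵏ`, `k = 0, …, 2n-1`,
has rank `2n` if and only if the `n×n` matrix with rows `c·Ωᵐ`,
`m = 0, …, n-1`, is invertible. -/
theorem observability_matrix_block_structure (n : ℕ) (d : Fin n → ℝ)
    (Ω : Matrix (Fin n) (Fin n) ℝ) (hΩ : Ω = Matrix.diagonal d)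
    (A : Matrix (Fin n ⊕ Fin n) (Fin n ⊕ Fin n) ℝ)
    (hA : A = Matrix.fromBlocks 0 1 Ω 0)
    (c : Fin n → ℝ) (C : Fin n ⊕ Fin n → ℝ)
    (hC : C = Sum.elim c 0) :
    (∀ m : ℕ,
        Matrix.vecMul C (A ^ (2 * m)) = Sum.elim (Matrix.vecMul c (Ω ^ m)) (0 : Fin n → ℝ) ∧
        Matrix.vecMul C (A ^ (2 * m + 1)) = Sum.elim (0 : Fin n → ℝ) (Matrix.vecMul c (Ω ^ m))) ∧
    ((Matrix.of fun (k : Fin (2 * n)) j => Matrix.vecMul C (A ^ (k : ℕ)) j).rank = 2 * n ↔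
        IsUnit (Matrix.of fun (m : Fin n) j => Matrix.vecMul c (Ω ^ (m : ℕ)) j)) := by
  have hA2 : A ^ 2 = Matrix.fromBlocks (Ω) 0 0 (Ω) := by
    subst hA; rw [pow_two, Matrix.fromBlocks_multiply]; simp
  have hpow : ∀ m : ℕ, A ^ (2 * m) = Matrix.fromBlocks (Ω ^ m) 0 0 (Ω ^ m) := by
    intro m
    induction m with
    | zero => simp [Matrix.fromBlocks_one]
    | succ m ih =>
      have : 2 * (m + 1) = 2 * m + 2 := by ring
      rw [this, pow_add, ih, hA2, Matrix.fromBlocks_multiply]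
      simp [pow_succ]
  have heven : ∀ m : ℕ, Matrix.vecMul C (A ^ (2 * m)) =
      Sum.elim (Matrix.vecMul c (Ω ^ m)) (0 : Fin n → ℝ) := by
    intro m
    rw [hpow, hC, Matrix.vecMul_fromBlocks]
    simp
  have hodd : ∀ m : ℕ, Matrix.vecMul C (A ^ (2 * m + 1)) =
      Sum.elim (0 : Fin n → ℝ) (Matrix.vecMul c (Ω ^ m)) := by
    intro m
    rw [pow_succ, hpow, hA, Matrix.fromBlocks_multiply, hC, Matrix.vecMul_fromBlocks]
    simp
  refine ⟨fun m => ⟨heven m, hodd m⟩, ?_⟩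
  set B : Matrix (Fin n) (Fin n) ℝ :=
    Matrix.of fun (m : Fin n) j => Matrix.vecMul c (Ω ^ (m : ℕ)) j with hB
  set O : Matrix (Fin (2 * n)) (Fin n ⊕ Fin n) ℝ :=
    Matrix.of fun (k : Fin (2 * n)) j => Matrix.vecMul C (A ^ (k : ℕ)) j with hO
  have hre : O = Matrix.reindex (interleave n) (Equiv.refl _)
      (Matrix.fromBlocks B 0 0 B) := by
    ext k j
    rw [Matrix.reindex_apply, Matrix.submatrix_apply, Equiv.refl_symm, Equiv.refl_apply]
    rcases h : (interleave n).symm k with m | m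
    · have hk : (k : ℕ) = 2 * (m : ℕ) := by
        have := congrArg (interleave n) h
        rw [Equiv.apply_symm_apply] at this
        exact congrArg Fin.val this
      cases j with
      | inl j => simp [hO, hk, heven (m : ℕ), hB]
      | inr j => simp [hO, hk, heven (m : ℕ)]
    · have hk : (k : ℕ) = 2 * (m : ℕ) + 1 := by
        have := congrArg (interleave n) h
        rw [Equiv.apply_symm_apply] at this
        exact congrArg Fin.val this
      cases j with
      | inl j => simp [hO, hk, hodd (m : ℕ)]
      | inr j => simp [hO, hk, hodd (m : ℕ), hB]
  have hrank : O.rank = (Matrix.fromBlocks B 0 0 B).rank := by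
    rw [hre, rank_reindex_rect]
  rw [hrank]
  have hcard : Fintype.card (Fin n ⊕ Fin n) = 2 * n := by simp; ring
  rw [← hcard, rank_eq_card_iff_isUnit]
  rw [Matrix.isUnit_iff_isUnit_det, Matrix.det_fromBlocks_zero₁₂,
    Matrix.isUnit_iff_isUnit_det (A := B)]
  exact ⟨fun h => (IsUnit.mul_iff.mp h).1, fun h => h.mul h⟩
end

section
/- Let n ∈ ℕ, let ω₁, …, ωₙ be positive real numbers that are pairwise distinct, let h ≠ 0, let p₁, …, pₙ ∈ ℝ, let Ω = diag(−ω₁², …, −ωₙ²), let A = [[0, Iₙ], [Ω, 0]] ∈ ℝ^{2n×2n}, and let C = [h·p₁, …, h·pₙ, 0, …, 0] ∈ ℝ^{1×2n}. Then the observability matrix whose rows are C·Aᵏ for k = 0, 1, …, 2n−1 has rank 2n if and only if pⱼ ≠ 0 for every j ∈ {1, …, n}. Equivalently, the truncated beam system is observable with a single strain sensor if and only if the sensor is not located at a zero of the second spatial derivative of any mode shape. -/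
open Matrix Module

/-- Rank is invariant under reindexing (rectangular version). -/
lemma rank_reindex' {m n m' n' : Type*} [Fintype n] [Fintype n']
    (e₁ : m ≃ m') (e₂ : n ≃ n') (A : Matrix m n ℝ) :
    (Matrix.reindex e₁ e₂ A).rank = A.rank := by
  rw [Matrix.rank, Matrix.rank, Matrix.mulVecLin_reindex, LinearMap.range_comp,
    LinearMap.range_comp, LinearEquiv.range, Submodule.map_top, LinearEquiv.finrank_map_eq]

/-- A square real matrix has full rank iff its determinant is nonzero. -/
lemma rank_eq_card_iff_det_ne_zero {ι : Type*} [Fintype ι] [DecidableEq ι]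
    (M : Matrix ι ι ℝ) : M.rank = Fintype.card ι ↔ M.det ≠ 0 := by
  constructor
  · intro hr hdet
    obtain ⟨v, hv, hMv⟩ := (Matrix.exists_mulVec_eq_zero_iff (M := M)).mpr hdet
    have hker : 0 < finrank ℝ (LinearMap.ker M.mulVecLin) := by
      rw [Module.finrank_pos_iff_exists_ne_zero]
      refine ⟨⟨v, by simpa [Matrix.mulVecLin_apply] using hMv⟩, ?_⟩
      simp [Subtype.ext_iff, hv]
    have hrn := LinearMap.finrank_range_add_finrank_ker M.mulVecLin
    rw [Module.finrank_pi] at hrn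
    have hrk : M.rank = finrank ℝ (LinearMap.range M.mulVecLin) := rfl
    omega
  · intro hdet
    exact M.rank_of_isUnit (M.isUnit_iff_isUnit_det.mpr (isUnit_iff_ne_zero.mpr hdet))

/-- Interleaving equivalence `Fin n ⊕ Fin n ≃ Fin (2n)`. -/
def pairEquiv (n : ℕ) : (Fin n ⊕ Fin n) ≃ Fin (2 * n) where
  toFun := Sum.elim (fun m => ⟨2 * m.1, by have := m.2; omega⟩)
    (fun m => ⟨2 * m.1 + 1, by have := m.2; omega⟩)
  invFun k := if Even k.1 then Sum.inl ⟨k.1 / 2, by have := k.2; omega⟩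
    else Sum.inr ⟨k.1 / 2, by have := k.2; omega⟩
  left_inv := by
    rintro (m | m)
    · simp only [Sum.elim_inl]
      simp only [show Even (2 * m.1) from ⟨m.1, by omega⟩, if_true]
      congr 1; ext; simp <;> omega
    · simp only [Sum.elim_inr]
      simp only [show ¬Even (2 * m.1 + 1) by rintro ⟨t, ht⟩; omega, if_false]
      congr 1; ext; simp <;> omega
  right_inv := by
    intro k
    dsimp only
    by_cases hk : Even k.1
    · obtain ⟨t, ht⟩ := hk
      rw [if_pos ⟨t, ht⟩]
      simp only [Sum.elim_inl]
      ext; simp <;> omega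
    · have h1 : k.1 % 2 = 1 := Nat.not_even_iff.mp hk
      rw [if_neg hk]
      simp only [Sum.elim_inr]
      ext; simp <;> omega

/-- Single-sensor observability of the truncated beam: with pairwise distinct
positive natural frequencies `ωⱼ`, `Ω = diag (-ωⱼ²)`, `A = [[0, I], [Ω, 0]]`,
`h ≠ 0`, and measurement row `C = [h·p₁, …, h·pₙ, 0, …, 0]`, the observability
matrix with rows `C·Aᵏ`, `k = 0, …, 2n-1`, has rank `2n` if and only if
`pⱼ ≠ 0` for every `j` (i.e. the sensor is not at a zero of the curvature of
any mode shape). -/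
theorem single_sensor_observability (n : ℕ) (ω : Fin n → ℝ)
    (hω : ∀ j, 0 < ω j) (hdist : Function.Injective ω)
    (h : ℝ) (hh : h ≠ 0) (p : Fin n → ℝ)
    (Ω : Matrix (Fin n) (Fin n) ℝ)
    (hΩ : Ω = Matrix.diagonal fun j => -(ω j ^ 2))
    (A : Matrix (Fin n ⊕ Fin n) (Fin n ⊕ Fin n) ℝ)
    (hA : A = Matrix.fromBlocks 0 1 Ω 0)
    (C : Fin n ⊕ Fin n → ℝ)
    (hC : C = Sum.elim (fun j => h * p j) (0 : Fin n → ℝ)) :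
    (Matrix.of fun (k : Fin (2 * n)) j => Matrix.vecMul C (A ^ (k : ℕ)) j).rank = 2 * n ↔
      ∀ j, p j ≠ 0 := by
  subst hΩ hA hC
  set μ : Fin n → ℝ := fun j => -(ω j ^ 2) with hμ
  -- closed form for the rows
  have key : ∀ k : ℕ,
      Matrix.vecMul (Sum.elim (fun j => h * p j) (0 : Fin n → ℝ))
        ((Matrix.fromBlocks 0 1 (Matrix.diagonal μ) 0 :
            Matrix (Fin n ⊕ Fin n) (Fin n ⊕ Fin n) ℝ) ^ k) =
      (if Even k then Sum.elim (fun j => h * p j * μ j ^ (k / 2)) 0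
        else Sum.elim 0 (fun j => h * p j * μ j ^ (k / 2))) := by
    intro k
    induction k with
    | zero => simp
    | succ k ih =>
      rw [pow_succ, ← Matrix.vecMul_vecMul, ih]
      rcases Nat.even_or_odd k with he | ho
      · obtain ⟨m, rfl⟩ := he
        rw [if_pos ⟨m, rfl⟩, if_neg (by rintro ⟨t, ht⟩; omega)]
        rw [Matrix.vecMul_fromBlocks]
        ext j
        simp only [Sum.elim_comp_inl, Sum.elim_comp_inr, Matrix.vecMul_zero,
          Matrix.zero_vecMul, Matrix.vecMul_one, add_zero, zero_add]
        have : (m + m + 1) / 2 = (m + m) / 2 := by omega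
        rw [this]
      · obtain ⟨m, rfl⟩ := ho
        rw [if_neg (by rintro ⟨t, ht⟩; omega), if_pos ⟨m + 1, by omega⟩]
        rw [Matrix.vecMul_fromBlocks]
        have h2 : (2 * m + 1) / 2 = m := by omega
        have h3 : (2 * m + 1 + 1) / 2 = m + 1 := by omega
        ext j
        rcases j with j | j
        · simp only [Sum.elim_comp_inl, Sum.elim_comp_inr, Matrix.vecMul_zero,
            Matrix.zero_vecMul, add_zero, zero_add, Sum.elim_inl]
          rw [Matrix.vecMul_diagonal, h2, h3, pow_succ]
          ring
        · simp only [Sum.elim_comp_inl, Sum.elim_comp_inr, Matrix.vecMul_zero,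
            Matrix.zero_vecMul, add_zero, zero_add, Sum.elim_inr, Pi.zero_apply]
  -- the basic block
  set B : Matrix (Fin n) (Fin n) ℝ :=
    Matrix.of (fun m j => h * p j * μ j ^ (m : ℕ)) with hB
  set N : Matrix (Fin n ⊕ Fin n) (Fin n ⊕ Fin n) ℝ :=
    Matrix.fromBlocks B 0 0 B with hN
  have hM : (Matrix.of fun (k : Fin (2 * n)) j =>
      Matrix.vecMul (Sum.elim (fun j => h * p j) (0 : Fin n → ℝ))
        ((Matrix.fromBlocks 0 1 (Matrix.diagonal μ) 0 :
            Matrix (Fin n ⊕ Fin n) (Fin n ⊕ Fin n) ℝ) ^ (k : ℕ)) j) =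
      Matrix.reindex (pairEquiv n) (Equiv.refl _) N := by
    ext k j
    rw [Matrix.of_apply, key (k : ℕ)]
    simp only [Matrix.reindex_apply, Matrix.submatrix_apply, Equiv.refl_symm, Equiv.refl_apply]
    by_cases hk : Even (k : ℕ)
    · rw [if_pos hk]
      have : (pairEquiv n).symm k = Sum.inl ⟨(k : ℕ) / 2, by have := k.2; omega⟩ := by
        simp only [pairEquiv, Equiv.coe_fn_symm_mk]
        rw [if_pos hk]
      rw [this]
      rcases j with j | j <;> simp [hN, hB]
    · rw [if_neg hk]
      have : (pairEquiv n).symm k = Sum.inr ⟨(k : ℕ) / 2, by have := k.2; omega⟩ := by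
        simp only [pairEquiv, Equiv.coe_fn_symm_mk]
        rw [if_neg hk]
      rw [this]
      rcases j with j | j <;> simp [hN, hB]
  rw [hM, rank_reindex']
  have hcard : Fintype.card (Fin n ⊕ Fin n) = 2 * n := by
    simp [Fintype.card_sum]; ring
  -- determinant of B
  have hBdet : B.det = (Matrix.vandermonde μ)ᵀ.det * ∏ j, (h * p j) := by
    have : B = (Matrix.vandermonde μ)ᵀ * Matrix.diagonal (fun j => h * p j) := by
      ext m j
      rw [Matrix.mul_diagonal]
      simp [hB, Matrix.vandermonde, mul_comm]
    rw [this, Matrix.det_mul, Matrix.det_diagonal]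
  have hμinj : Function.Injective μ := by
    intro i j hij
    have h2 : ω i ^ 2 = ω j ^ 2 := by
      have h0 : -(ω i ^ 2) = -(ω j ^ 2) := hij
      linarith
    have h3 : (ω i - ω j) * (ω i + ω j) = 0 := by ring_nf; linarith [h2]
    rcases mul_eq_zero.mp h3 with h4 | h4
    · exact hdist (by linarith)
    · exfalso; have := hω i; have := hω j; linarith
  have hV : (Matrix.vandermonde μ).det ≠ 0 :=
    Matrix.det_vandermonde_ne_zero_iff.mpr hμinj
  have hNdet : N.det = B.det * B.det := by
    rw [hN, Matrix.det_fromBlocks_zero₂₁]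
  rw [show (2 * n) = Fintype.card (Fin n ⊕ Fin n) from hcard.symm,
    rank_eq_card_iff_det_ne_zero, hNdet]
  constructor
  · intro hne j hpj
    apply hne
    rw [hBdet, Matrix.det_transpose]
    have : ∏ j, (h * p j) = 0 :=
      Finset.prod_eq_zero (Finset.mem_univ j) (by simp [hpj])
    simp [this]
  · intro hp
    have hprod : ∏ j, (h * p j) ≠ 0 :=
      Finset.prod_ne_zero_iff.mpr fun j _ => mul_ne_zero hh (hp j)
    have : B.det ≠ 0 := by
      rw [hBdet, Matrix.det_transpose]
      exact mul_ne_zero hV hprod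
    exact mul_ne_zero this this
end
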